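/- arXiv:1409.7504 — 5 statements merged into one kernel-verified Lean document; each statement's English description precedes it below -/
import Mathlib

section
/- Let n and m be even integers with m > n ≥ 2, and suppose 𝔅_n ≠ 𝔅_m. Then ord_2(1/𝔅_n − 1/𝔅_m) = 2 + ord_2(𝔅_n − 𝔅_m). -/
open Finset

lemma ysum (n : ℕ) (hn : 2 ≤ n) (hne : Even n) :
    ∑ i ∈ Ico 2 n, ((n+1).choose i : ℚ) * ((1 + (-1)^i)/2)
      = 2^n - n - 2 := by
  have h1 : ∑ i ∈ range (n+2), ((n+1).choose i : ℚ) = 2^(n+1) := by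
    exact_mod_cast congrArg (Nat.cast : ℕ → ℚ) (Nat.sum_range_choose (n+1))
  have h2 : ∑ i ∈ range (n+2), ((-1)^i * ((n+1).choose i) : ℚ) = 0 := by
    have := Int.alternating_sum_range_choose_of_ne (n := n+1) (by omega)
    exact_mod_cast congrArg (Int.cast : ℤ → ℚ) this
  have hsplit : ∀ f : ℕ → ℚ, ∑ i ∈ range (n+2), f i
      = f 0 + f 1 + (∑ i ∈ Ico 2 n, f i + f n + f (n+1)) := by
    intro f
    rw [range_eq_Ico, Finset.sum_eq_sum_Ico_succ_bot (by omega),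
      Finset.sum_eq_sum_Ico_succ_bot (show 1 < n+2 by omega),
      Finset.sum_Ico_succ_top (show 2 ≤ n+1 by omega),
      Finset.sum_Ico_succ_top (show 2 ≤ n by omega)]
    ring
  rw [hsplit] at h1 h2
  have hn1 : ((-1:ℚ))^n = 1 := hne.neg_one_pow
  have hn2 : ((-1:ℚ))^(n+1) = -1 := by rw [pow_succ, hn1]; ring
  simp only [Nat.choose_zero_right, Nat.choose_one_right, Nat.choose_succ_self_right,
    Nat.choose_self, Nat.cast_one, pow_zero, pow_one, hn1, hn2] at h1 h2
  have key : ∑ i ∈ Ico 2 n, ((n+1).choose i : ℚ) * ((1 + (-1)^i)/2)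
      = ((∑ i ∈ Ico 2 n, ((n+1).choose i : ℚ))
        + ∑ i ∈ Ico 2 n, ((-1)^i * ((n+1).choose i) : ℚ))/2 := by
    rw [← Finset.sum_add_distrib, Finset.sum_div]
    exact Finset.sum_congr rfl (fun i _ => by ring)
  rw [key]
  have hp : (2:ℚ)^(n+1) = 2^n * 2 := pow_succ 2 n
  push_cast at h1 h2 ⊢
  linarith


lemma recA (n : ℕ) (hn : 2 ≤ n) :
    2*(n+1)*bernoulli n
      = ((n:ℚ) - 1) - ∑ i ∈ Ico 2 n, ((n+1).choose i : ℚ) * (2 * bernoulli i) := by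
  have h := sum_bernoulli (n+1)
  rw [if_neg (by omega), Finset.sum_range_succ] at h
  rw [range_eq_Ico, Finset.sum_eq_sum_Ico_succ_bot (show 0 < n by omega),
    Finset.sum_eq_sum_Ico_succ_bot (show 1 < n by omega)] at h
  simp only [Nat.choose_zero_right, Nat.choose_one_right, Nat.choose_succ_self_right,
    bernoulli_zero, bernoulli_one, Nat.cast_one] at h
  have hS : ∑ i ∈ Ico 2 n, ((n+1).choose i : ℚ) * (2 * bernoulli i)
      = 2 * ∑ i ∈ Ico 2 n, ((n+1).choose i : ℚ) * bernoulli i := by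
    rw [Finset.mul_sum]; exact Finset.sum_congr rfl fun i _ => by ring
  rw [hS]
  push_cast at h ⊢
  linarith

lemma key : ∀ n : ℕ, 2 ≤ n → Even n → ‖((2 * bernoulli n : ℚ) : ℚ_[2]) - 1‖ ≤ 2⁻¹ := by
  intro n
  induction n using Nat.strong_induction_on with
  | _ n ih =>
  intro hn hne
  have hA := congrArg (fun q : ℚ => (q : ℚ_[2])) (recA n hn)
  push_cast at hA
  set X : ℚ_[2] := ((2 * bernoulli n : ℚ) : ℚ_[2]) with hX
  have hXc : X = 2 * ((bernoulli n : ℚ) : ℚ_[2]) := by rw [hX]; push_cast; ring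
  set S : ℚ_[2] := ∑ i ∈ Ico 2 n, ((n+1).choose i : ℚ_[2]) * (2 * ((bernoulli i : ℚ) : ℚ_[2]))
    with hSdef
  have hA' : ((n:ℚ_[2])+1) * X = ((n:ℚ_[2]) - 1) - S := by
    rw [hXc]; linear_combination hA
  -- n+1 is a 2-adic unit
  have hne0 : ((n:ℚ_[2])+1) ≠ 0 := by exact_mod_cast Nat.cast_add_one_ne_zero (R := ℚ_[2]) n
  have hnorm1 : ‖((n:ℚ_[2])+1)‖ = 1 := by
    have hle : ‖(((n:ℤ)+1 : ℤ) : ℚ_[2])‖ ≤ 1 := Padic.norm_int_le_one _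
    have hlt : ¬ ‖(((n:ℤ)+1 : ℤ) : ℚ_[2])‖ < 1 := by
      rw [Padic.norm_intCast_lt_one_iff]
      obtain ⟨k, hk⟩ := hne
      omega
    have : ‖(((n:ℤ)+1 : ℤ) : ℚ_[2])‖ = 1 := le_antisymm hle (not_lt.mp hlt)
    push_cast at this; exact this
  -- decompose S
  have hy := ysum n hn hne
  have hSsplit : S = ((2^n - (n:ℚ) - 2 : ℚ) : ℚ_[2])
      + ∑ i ∈ Ico 2 n, ((n+1).choose i : ℚ_[2])
        * ((2 * ((bernoulli i : ℚ) : ℚ_[2])) - (((1 + (-1)^i)/2 : ℚ) : ℚ_[2])) := by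
    have : ((∑ i ∈ Ico 2 n, ((n+1).choose i : ℚ) * ((1 + (-1)^i)/2) : ℚ) : ℚ_[2])
        = ∑ i ∈ Ico 2 n, ((n+1).choose i : ℚ_[2]) * (((1 + (-1)^i)/2 : ℚ) : ℚ_[2]) := by
      push_cast; rfl
    rw [hy] at this
    rw [hSdef, this, ← Finset.sum_add_distrib]
    exact Finset.sum_congr rfl fun i _ => by ring
  -- norm bounds
  have hZ : ‖((2^n - (n:ℚ) - 2 : ℚ) : ℚ_[2]) + 2‖ ≤ 2⁻¹ := by
    have hcast : ((2^n - (n:ℚ) - 2 : ℚ) : ℚ_[2]) + 2 = (((2^n - n - 2 : ℤ) : ℤ) : ℚ_[2]) + 2 := by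
      push_cast
      ring
    rw [hcast]
    have heq : (((2^n - n - 2 : ℤ) : ℤ) : ℚ_[2]) + 2 = (((2^n - n : ℤ) : ℤ) : ℚ_[2]) := by
      push_cast; ring
    rw [heq]
    have := (Padic.norm_int_le_pow_iff_dvd (p := 2) ((2:ℤ)^n - n) 1).mpr (by
      obtain ⟨k, hk⟩ := hne
      have h1 : (2:ℤ) ∣ 2^n := dvd_pow_self 2 (by omega)
      have h2 : (2:ℤ) ∣ (n:ℤ) := ⟨k, by push_cast [hk]; ring⟩
      simpa using dvd_sub h1 h2)
    simpa using this
  have hE : ‖∑ i ∈ Ico 2 n, ((n+1).choose i : ℚ_[2])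
      * ((2 * ((bernoulli i : ℚ) : ℚ_[2])) - (((1 + (-1)^i)/2 : ℚ) : ℚ_[2]))‖ ≤ 2⁻¹ := by
    apply IsUltrametricDist.norm_sum_le_of_forall_le_of_nonneg (by norm_num)
    intro i hi
    rw [Finset.mem_Ico] at hi
    rw [norm_mul]
    have hc : ‖((n+1).choose i : ℚ_[2])‖ ≤ 1 := by
      have := Padic.norm_int_le_one (p := 2) ((n+1).choose i : ℤ)
      push_cast at this; exact this
    rcases Nat.even_or_odd i with hie | hio
    · have hyi : (((1 + (-1)^i)/2 : ℚ) : ℚ_[2]) = 1 := by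
        rw [hie.neg_one_pow]; norm_num
      have hxi : 2 * ((bernoulli i : ℚ) : ℚ_[2]) = ((2 * bernoulli i : ℚ) : ℚ_[2]) := by
        push_cast; ring
      rw [hyi, hxi]
      calc ‖((n+1).choose i : ℚ_[2])‖ * ‖((2 * bernoulli i : ℚ) : ℚ_[2]) - 1‖
          ≤ 1 * 2⁻¹ := by
            apply mul_le_mul hc (ih i hi.2 hi.1 hie) (norm_nonneg _) zero_le_one
        _ = 2⁻¹ := one_mul _
    · have hyi : (((1 + (-1)^i)/2 : ℚ) : ℚ_[2]) = 0 := by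
        rw [Odd.neg_one_pow hio]; norm_num
      have hbi : bernoulli i = 0 := by
        rw [bernoulli_eq_bernoulli'_of_ne_one (by omega)]
        exact bernoulli'_eq_zero_of_odd hio (by omega)
      rw [hyi, hbi]
      norm_num
  -- conclude
  have hX1 : X - 1 = (-2 - S)/((n:ℚ_[2])+1) := by
    field_simp
    linear_combination hA'
  rw [hX1, norm_div, hnorm1, div_one]
  have h2S : -2 - S = -((((2^n - (n:ℚ) - 2 : ℚ) : ℚ_[2]) + 2)
      + ∑ i ∈ Ico 2 n, ((n+1).choose i : ℚ_[2])
        * ((2 * ((bernoulli i : ℚ) : ℚ_[2])) - (((1 + (-1)^i)/2 : ℚ) : ℚ_[2]))) := by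
    rw [hSsplit]; ring
  rw [h2S, norm_neg]
  exact le_trans (IsUltrametricDist.norm_add_le_max _ _) (max_le hZ hE)

lemma bval (n : ℕ) (hn : 2 ≤ n) (hne : Even n) :
    bernoulli n ≠ 0 ∧ padicValRat 2 (bernoulli n) = -1 := by
  have h := key n hn hne
  set X : ℚ_[2] := ((2 * bernoulli n : ℚ) : ℚ_[2]) with hX
  have hXnorm : ‖X‖ = 1 := by
    have hle : ‖X‖ ≤ 1 := by
      have : X = (X - 1) + 1 := by ring
      rw [this]
      refine le_trans (IsUltrametricDist.norm_add_le_max _ _) (max_le (le_trans h ?_) ?_) <;>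
        norm_num
    rcases lt_or_eq_of_le hle with hlt | heq
    · exfalso
      have h2 : ‖(X - 1) + 1‖ < ‖(1 : ℚ_[2])‖ := by
        simpa using hlt
      have := Padic.norm_eq_of_norm_add_lt_right h2
      rw [norm_one] at this
      rw [this] at h
      norm_num at h
    · exact heq
  have hq0 : (2 * bernoulli n : ℚ) ≠ 0 := by
    intro h0
    rw [hX, h0] at hXnorm
    simp at hXnorm
  have hb0 : bernoulli n ≠ 0 := by
    intro h0; exact hq0 (by rw [h0, mul_zero])
  refine ⟨hb0, ?_⟩
  have hpn : padicNorm 2 (2 * bernoulli n) = 1 := by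
    have := Padic.eq_padicNorm (p := 2) (2 * bernoulli n)
    rw [← hX, hXnorm] at this
    exact_mod_cast this.symm
  rw [padicNorm.eq_zpow_of_nonzero hq0] at hpn
  have hv0 : padicValRat 2 (2 * bernoulli n) = 0 := by
    have := zpow_right_injective₀ (a := (2:ℚ)) (by norm_num) (by norm_num)
      (a₁ := -padicValRat 2 (2 * bernoulli n)) (a₂ := 0) (by simpa using hpn)
    omega
  have hmul := padicValRat.mul (p := 2) (q := 2) (r := bernoulli n) (by norm_num) hb0
  rw [hv0] at hmul
  have h2 : padicValRat 2 2 = 1 := by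
    have := padicValRat.self (p := 2) (by norm_num)
    exact_mod_cast this
  omega

/-- For even `m > n ≥ 2` with `𝔅_n ≠ 𝔅_m`, the 2-adic valuation of
`1/𝔅_n - 1/𝔅_m` equals `2 + ord_2(𝔅_n - 𝔅_m)`. -/
theorem padicValRat_two_inv_bernoulli_sub (n m : ℕ) (hn : 2 ≤ n) (hnm : n < m)
    (hne : Even n) (hme : Even m) (hB : bernoulli n ≠ bernoulli m) :
    padicValRat 2 (1 / bernoulli n - 1 / bernoulli m) =
      2 + padicValRat 2 (bernoulli n - bernoulli m) := by
  obtain ⟨ha0, hva⟩ := bval n hn hne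
  obtain ⟨hb0, hvb⟩ := bval m (by omega) hme
  set a := bernoulli n
  set b := bernoulli m
  have hab : a - b ≠ 0 := sub_ne_zero.mpr hB
  have hba : b - a ≠ 0 := sub_ne_zero.mpr (Ne.symm hB)
  have heq : 1 / a - 1 / b = (b - a) / (a * b) := by
    field_simp
  rw [heq, padicValRat.div (p := 2) hba (mul_ne_zero ha0 hb0),
    padicValRat.mul (p := 2) ha0 hb0, hva, hvb]
  have : padicValRat 2 (b - a) = padicValRat 2 (a - b) := by
    rw [show b - a = -(a - b) by ring, padicValRat.neg]
  rw [this]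
  ring
end

section
/- Let p be a prime and let n, m ≥ 2 be even integers with n ≡ m (mod p − 1). Then the difference 𝔅_n − 𝔅_m is a p-adic integer; that is, p does not divide the denominator of 𝔅_n − 𝔅_m in lowest terms. -/
open Finset

section Aux

variable {p : ℕ}

lemma den_add_nd (hp : p.Prime) {a b : ℚ} (ha : ¬ p ∣ a.den) (hb : ¬ p ∣ b.den) :
    ¬ p ∣ (a + b).den := fun h =>
  ((hp.dvd_mul.mp (h.trans (Rat.add_den_dvd a b))).elim ha hb)

lemma den_mul_nd (hp : p.Prime) {a b : ℚ} (ha : ¬ p ∣ a.den) (hb : ¬ p ∣ b.den) :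
    ¬ p ∣ (a * b).den := fun h =>
  ((hp.dvd_mul.mp (h.trans (Rat.mul_den_dvd a b))).elim ha hb)

lemma den_neg_nd {a : ℚ} (ha : ¬ p ∣ a.den) : ¬ p ∣ (-a).den := by
  rwa [Rat.neg_den]

lemma den_nat_nd (hp : p.Prime) (c : ℕ) : ¬ p ∣ ((c:ℚ)).den := by
  rw [Rat.den_natCast]; exact fun h => hp.one_lt.ne' (Nat.eq_one_of_dvd_one h)

lemma den_sum_nd {ι : Type*} (hp : p.Prime) {s : Finset ι} {f : ι → ℚ}
    (h : ∀ i ∈ s, ¬ p ∣ (f i).den) : ¬ p ∣ (∑ i ∈ s, f i).den := by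
  classical
  induction s using Finset.induction_on with
  | empty => simpa using den_nat_nd hp 1
  | @insert x s hx ih =>
      rw [Finset.sum_insert hx]
      exact den_add_nd hp (h x (mem_insert_self x s))
        (ih fun i hi => h i (mem_insert_of_mem hi))

lemma den_intdiv (hp : p.Prime) (a : ℤ) {k : ℕ} (hk : ¬ p ∣ k) :
    ¬ p ∣ ((a : ℚ) / (k : ℚ)).den := by
  intro h
  have h1 : (((a : ℚ) / (k : ℚ)).den : ℤ) ∣ (k : ℤ) := by
    rw [show ((k:ℚ)) = ((k:ℤ):ℚ) by push_cast; ring, ← Rat.divInt_eq_div]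
    exact Rat.den_dvd a k
  exact hk (dvd_trans h (by exact_mod_cast h1))

lemma padicValNat_lt' (hp : p.Prime) {k : ℕ} (hk : k ≠ 0) : padicValNat p k < k := by
  have h1 : p ^ (padicValNat p k) ≤ k := by
    have := Nat.ordProj_le p hk
    rwa [Nat.factorization_def _ hp] at this
  have h2 : k < p ^ k := Nat.lt_pow_self hp.one_lt
  exact (Nat.pow_lt_pow_iff_right hp.one_lt).mp (lt_of_le_of_lt h1 h2)

lemma aux_lt_three_pow : ∀ j : ℕ, 1 ≤ j → j + 1 < 3 ^ j := by
  intro j hj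
  induction j with
  | zero => omega
  | succ i ih =>
      rcases Nat.eq_or_lt_of_le hj with h | h
      · simp [← h]
      · have h1 := ih (by omega)
        have h2 : (3:ℕ)^(i+1) = 3^i + 3^i + 3^i := by ring
        omega

lemma padicValNat_le_sub_two (hp : p.Prime) {k : ℕ} (h3 : 3 ≤ k) (hodd : Odd k) :
    padicValNat p k ≤ k - 2 := by
  by_cases hp2 : p = 2
  · subst hp2
    rw [padicValNat.eq_zero_of_not_dvd (fun h => by
      rcases h with ⟨c, rfl⟩; exact (Nat.odd_iff.mp hodd).symm.trans_ne (by omega) rfl)]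
    omega
  · have hp3 : 3 ≤ p := by have := hp.two_le; omega
    by_contra hcon
    push_neg at hcon
    have hv : k - 1 ≤ padicValNat p k := by omega
    have h1 : p ^ (padicValNat p k) ≤ k := by
      have := Nat.ordProj_le p (by omega : k ≠ 0)
      rwa [Nat.factorization_def _ hp] at this
    have h2 : (3:ℕ) ^ (k-1) ≤ p ^ (k-1) := Nat.pow_le_pow_left hp3 _
    have h3' : p ^ (k-1) ≤ p ^ (padicValNat p k) := Nat.pow_le_pow_right (by omega) hv
    have h4 : (k-1) + 1 < 3 ^ (k-1) := aux_lt_three_pow _ (by omega)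
    omega

lemma den_ppow_div (hp : p.Prime) {a k : ℕ} (hk : k ≠ 0) (hv : padicValNat p k ≤ a) :
    ¬ p ∣ ((p:ℚ) ^ a / (k : ℚ)).den := by
  set v := padicValNat p k with hvdef
  have hfac : p ^ v * (k / p ^ v) = k := by
    have := Nat.ordProj_mul_ordCompl_eq_self k p
    rwa [Nat.factorization_def _ hp] at this
  have hk' : ¬ p ∣ (k / p ^ v) := by
    have := Nat.not_dvd_ordCompl hp hk
    rwa [Nat.factorization_def _ hp] at this
  have hp0 : (p:ℚ) ≠ 0 := by exact_mod_cast hp.pos.ne'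
  have hkq : ((k / p ^ v : ℕ) : ℚ) ≠ 0 := by
    have : k / p ^ v ≠ 0 := fun h => hk (by rw [h, Nat.mul_zero] at hfac; omega)
    exact_mod_cast this
  have hsplit : (p:ℚ) ^ a = (p:ℚ) ^ (a - v) * (p:ℚ) ^ v := by
    rw [← pow_add]; congr 1; omega
  have hkk : ((k:ℚ)) = (p:ℚ) ^ v * ((k / p ^ v : ℕ) : ℚ) := by exact_mod_cast hfac.symm
  have heq : (p:ℚ) ^ a / (k : ℚ) = (((p:ℤ) ^ (a - v) : ℤ) : ℚ) / ((k / p ^ v : ℕ) : ℚ) := by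
    push_cast
    rw [div_eq_div_iff (by exact_mod_cast hk) hkq, hsplit, hkk]; ring
  rw [heq]
  exact den_intdiv hp _ hk'

/-- Faulhaber's formula, rearranged. -/
theorem faulhaber' (p n : ℕ) (hn : 1 ≤ n) :
    (p:ℚ) * bernoulli n = (∑ k ∈ range p, (k:ℚ) ^ n)
      - ∑ i ∈ range n, bernoulli i * (n.choose i) * ((p:ℚ) ^ (n + 1 - i) / ((n + 1 - i : ℕ) : ℚ)) := by
  have key := sum_range_pow p n
  have step : ∀ i ∈ range (n+1),
      bernoulli i * (((n+1).choose i : ℕ) : ℚ) * (p:ℚ) ^ (n + 1 - i) / ((n:ℚ)+1)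
        = bernoulli i * (n.choose i) * ((p:ℚ) ^ (n + 1 - i) / ((n + 1 - i : ℕ) : ℚ)) := by
    intro i hi
    rw [mem_range] at hi
    have hne : ((n + 1 - i : ℕ) : ℚ) ≠ 0 := by
      have : n + 1 - i ≠ 0 := by omega
      exact_mod_cast this
    have h1 : ((n+1).choose i : ℚ) / ((n:ℚ)+1) = ((n.choose i : ℕ) : ℚ) / ((n + 1 - i : ℕ) : ℚ) := by
      rw [div_eq_div_iff (by positivity) hne]
      exact_mod_cast (Nat.choose_mul_succ_eq n i).symm
    calc bernoulli i * (((n+1).choose i : ℕ) : ℚ) * (p:ℚ) ^ (n + 1 - i) / ((n:ℚ)+1)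
        = bernoulli i * (p:ℚ) ^ (n + 1 - i) * ((((n+1).choose i : ℕ) : ℚ) / ((n:ℚ)+1)) := by ring
      _ = bernoulli i * (p:ℚ) ^ (n + 1 - i) * (((n.choose i : ℕ) : ℚ) / ((n + 1 - i : ℕ) : ℚ)) := by
          rw [h1]
      _ = bernoulli i * (n.choose i) * ((p:ℚ) ^ (n + 1 - i) / ((n + 1 - i : ℕ) : ℚ)) := by ring
  rw [Finset.sum_congr rfl step, Finset.sum_range_succ] at key
  have hlast : bernoulli n * ((n.choose n : ℕ) : ℚ) * ((p:ℚ) ^ (n + 1 - n) / ((n + 1 - n : ℕ) : ℚ))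
      = (p:ℚ) * bernoulli n := by
    rw [Nat.choose_self, show n + 1 - n = 1 by omega]
    push_cast; ring
  rw [hlast] at key
  linarith [key]

lemma den_S_nd (hp : p.Prime) (n : ℕ) : ¬ p ∣ (∑ k ∈ range p, (k:ℚ) ^ n).den := by
  have : (∑ k ∈ range p, (k:ℚ) ^ n) = ((∑ k ∈ range p, k ^ n : ℕ) : ℚ) := by push_cast; ring
  rw [this]; exact den_nat_nd hp _

/-- `p * bernoulli n` has denominator prime to `p` (a weak von Staudt–Clausen). -/
lemma bern_den_nd (hp : p.Prime) : ∀ n : ℕ, ¬ p ∣ ((p:ℚ) * bernoulli n).den := by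
  intro n
  induction n using Nat.strong_induction_on with
  | _ n ih =>
    rcases Nat.eq_zero_or_pos n with rfl | hn
    · simpa [bernoulli_zero] using den_nat_nd hp p
    · rw [faulhaber' p n hn, sub_eq_add_neg]
      refine den_add_nd hp (den_S_nd hp n) (den_neg_nd (den_sum_nd hp ?_))
      intro i hi
      rw [mem_range] at hi
      have hterm : bernoulli i * (n.choose i) * ((p:ℚ) ^ (n + 1 - i) / ((n + 1 - i : ℕ) : ℚ))
          = ((p:ℚ) * bernoulli i) * (((n.choose i : ℕ)) : ℚ)
              * ((p:ℚ) ^ (n - i) / ((n + 1 - i : ℕ) : ℚ)) := by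
        rw [show n + 1 - i = (n - i) + 1 by omega, pow_succ]; ring
      rw [hterm]
      refine den_mul_nd hp (den_mul_nd hp (ih i hi) (den_nat_nd hp _)) ?_
      exact den_ppow_div hp (by omega) (by
        have := padicValNat_lt' hp (k := n + 1 - i) (by omega); omega)

/-- The key congruence: `p * 𝔅_n ≡ ∑_{k<p} k^n` modulo `p` (p-adically), for even `n ≥ 2`. -/
lemma bern_key (hp : p.Prime) {n : ℕ} (hn : 2 ≤ n) (hne : Even n) :
    ∃ q : ℚ, ¬ p ∣ q.den ∧
      (p:ℚ) * bernoulli n = ((∑ k ∈ range p, k ^ n : ℕ) : ℚ) + (p:ℚ) * q := by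
  refine ⟨-∑ i ∈ range n, bernoulli i * (n.choose i) * ((p:ℚ) ^ (n - i) / ((n + 1 - i : ℕ) : ℚ)),
    ?_, ?_⟩
  · refine den_neg_nd (den_sum_nd hp ?_)
    intro i hi
    rw [mem_range] at hi
    rcases Nat.even_or_odd i with hie | hio
    · -- i even: factor one more p out of p^(n-i)
      have hterm : bernoulli i * (n.choose i) * ((p:ℚ) ^ (n - i) / ((n + 1 - i : ℕ) : ℚ))
          = ((p:ℚ) * bernoulli i) * (((n.choose i : ℕ)) : ℚ)
              * ((p:ℚ) ^ (n - i - 1) / ((n + 1 - i : ℕ) : ℚ)) := by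
        have hps : (p:ℚ) ^ (n - i) = (p:ℚ) * (p:ℚ) ^ (n - i - 1) := by
          rw [← pow_succ']; congr 1; omega
        rw [hps]; ring
      rw [hterm]
      refine den_mul_nd hp (den_mul_nd hp (bern_den_nd hp i) (den_nat_nd hp _)) ?_
      refine den_ppow_div hp (by omega) ?_
      have h3 : 3 ≤ n + 1 - i := by
        rcases hne with ⟨a, ha⟩; rcases hie with ⟨b, hb⟩; omega
      have hodd : Odd (n + 1 - i) := by
        rcases hne with ⟨a, ha⟩; rcases hie with ⟨b, hb⟩
        exact ⟨a - b, by omega⟩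
      have := padicValNat_le_sub_two hp h3 hodd
      omega
    · rcases Nat.eq_or_lt_of_le hio.pos with h1 | h1
      · -- i = 1
        have hn1 : ((n : ℚ)) ≠ 0 := by exact_mod_cast (by omega : n ≠ 0)
        have hterm : bernoulli 1 * ((n.choose 1 : ℕ) : ℚ) * ((p:ℚ) ^ (n - 1) / ((n + 1 - 1 : ℕ) : ℚ))
            = -((p:ℚ) ^ (n - 1) / ((2:ℕ) : ℚ)) := by
          rw [bernoulli_one, Nat.choose_one_right, show n + 1 - 1 = n by omega]
          push_cast
          field_simp
        rw [← h1, hterm]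
        refine den_neg_nd (den_ppow_div hp (by omega) ?_)
        have := padicValNat_lt' hp (k := 2) (by omega)
        omega
      · -- i odd, i ≥ 3 : bernoulli i = 0
        have : bernoulli i = 0 := by
          rw [bernoulli_eq_bernoulli'_of_ne_one (by omega)]
          exact bernoulli'_eq_zero_of_odd hio h1
        rw [this]
        simpa using den_nat_nd hp 1
  · have key := faulhaber' p n (by omega)
    have hS : (∑ k ∈ range p, (k:ℚ) ^ n) = ((∑ k ∈ range p, k ^ n : ℕ) : ℚ) := by push_cast; ring
    rw [key, hS, mul_neg, Finset.mul_sum]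
    rw [sub_eq_add_neg]
    congr 1
    congr 1
    refine Finset.sum_congr rfl fun i hi => ?_
    rw [mem_range] at hi
    rw [show n + 1 - i = (n - i) + 1 by omega, pow_succ]
    ring

lemma zmod_pow_congr (hp : p.Prime) {n m : ℕ} (hn : 1 ≤ n) (hm : 1 ≤ m)
    (h : n ≡ m [MOD p - 1]) (x : ZMod p) : x ^ n = x ^ m := by
  haveI : Fact p.Prime := ⟨hp⟩
  by_cases hx : x = 0
  · subst hx; rw [zero_pow (by omega), zero_pow (by omega)]
  · have h1 : x ^ (p - 1) = 1 := ZMod.pow_card_sub_one_eq_one hx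
    have key : ∀ j : ℕ, x ^ j = x ^ (j % (p - 1)) := by
      intro j
      conv_lhs => rw [show j = (p - 1) * (j / (p - 1)) + j % (p - 1) from
        (Nat.div_add_mod j (p-1)).symm]
      rw [pow_add, pow_mul, h1, one_pow, one_mul]
    rw [key n, key m, h]

end Aux

/-- If `n, m ≥ 2` are even with `n ≡ m (mod p - 1)` for a prime `p`, then
`𝔅_n - 𝔅_m` is a `p`-adic integer. -/
theorem bernoulli_sub_padic_integer (p : ℕ) (hp : p.Prime) (n m : ℕ)
    (hn : 2 ≤ n) (hm : 2 ≤ m) (hne : Even n) (hme : Even m)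
    (hmod : n ≡ m [MOD p - 1]) :
    ¬ ((p : ℤ) ∣ ((bernoulli n - bernoulli m).den : ℤ)) := by
  obtain ⟨qn, hqn, hn'⟩ := bern_key hp hn hne
  obtain ⟨qm, hqm, hm'⟩ := bern_key hp hm hme
  have hcong : (∑ k ∈ range p, k ^ n) ≡ (∑ k ∈ range p, k ^ m) [MOD p] := by
    rw [← ZMod.natCast_eq_natCast_iff]
    push_cast
    exact Finset.sum_congr rfl fun x _ => zmod_pow_congr hp (by omega) (by omega) hmod _
  obtain ⟨c, hc⟩ : (p : ℤ) ∣ ((∑ k ∈ range p, k ^ n : ℕ) : ℤ) - ((∑ k ∈ range p, k ^ m : ℕ) : ℤ) :=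
    (Nat.ModEq.dvd hcong.symm)
  have hp0 : ((p:ℚ)) ≠ 0 := by exact_mod_cast hp.pos.ne'
  have hiden : bernoulli n - bernoulli m = (c : ℚ) + (qn + -qm) := by
    apply mul_left_cancel₀ hp0
    have hcQ : (((∑ k ∈ range p, k ^ n : ℕ) : ℚ)) - ((∑ k ∈ range p, k ^ m : ℕ) : ℚ)
        = (p : ℚ) * (c : ℚ) := by
      exact_mod_cast hc
    linear_combination hn' - hm' + hcQ
  rw [hiden]
  have h1 : ¬ p ∣ ((c:ℚ)).den := by
    rw [Rat.den_intCast]; exact fun h => hp.one_lt.ne' (Nat.eq_one_of_dvd_one h)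
  have := den_add_nd hp h1 (den_add_nd hp hqn (den_neg_nd hqm))
  intro h
  exact this (by exact_mod_cast h)
end

section
/- Let k be an odd positive integer and let B_m = (−1)^{m+1}·𝔅_{2m} denote the m-th topologist's Bernoulli number. Then 4 divides Num((B_{2k} + B_k)/(B_{2k}·B_k)); equivalently, 4 divides the numerator of the rational number 1/𝔅_{2k} − 1/𝔅_{4k}. -/
open Finset

lemma odd_intCast_zmod2 {b : ℤ} (hb : Odd b) : ((b : ZMod 2)) = 1 := by
  obtain ⟨t, ht⟩ := hb
  subst ht
  push_cast
  rw [(by decide : (2 : ZMod 2) = 0)]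
  ring

/-- `q` is a 2-adic integer with residue `ε` mod 2, witnessed by an odd denominator. -/
def PP (q : ℚ) (ε : ZMod 2) : Prop :=
  ∃ a b : ℤ, Odd b ∧ q * b = a ∧ (a : ZMod 2) = ε

lemma PP_int (n : ℤ) : PP (n : ℚ) (n : ZMod 2) :=
  ⟨n, 1, odd_one, by push_cast; ring, rfl⟩

lemma PP_zero : PP 0 0 := ⟨0, 1, odd_one, by norm_num, by norm_num⟩

lemma PP_add {q r : ℚ} {ε δ : ZMod 2} (hq : PP q ε) (hr : PP r δ) :
    PP (q + r) (ε + δ) := by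
  obtain ⟨a, b, hb, hab, ha⟩ := hq
  obtain ⟨c, d, hd, hcd, hc⟩ := hr
  refine ⟨a * d + c * b, b * d, hb.mul hd, ?_, ?_⟩
  · push_cast
    calc (q + r) * (b * d) = (q * b) * d + (r * d) * b := by ring
      _ = (a : ℚ) * d + (c : ℚ) * b := by rw [hab, hcd]
  · push_cast
    rw [ha, hc, odd_intCast_zmod2 hb, odd_intCast_zmod2 hd]
    ring

lemma PP_mul {q r : ℚ} {ε δ : ZMod 2} (hq : PP q ε) (hr : PP r δ) :
    PP (q * r) (ε * δ) := by
  obtain ⟨a, b, hb, hab, ha⟩ := hq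
  obtain ⟨c, d, hd, hcd, hc⟩ := hr
  refine ⟨a * c, b * d, hb.mul hd, ?_, by push_cast [ha, hc]; rfl⟩
  push_cast
  calc (q * r) * (b * d) = (q * b) * (r * d) := by ring
    _ = (a : ℚ) * (c : ℚ) := by rw [hab, hcd]

lemma PP_neg {q : ℚ} {ε : ZMod 2} (hq : PP q ε) : PP (-q) ε := by
  obtain ⟨a, b, hb, hab, ha⟩ := hq
  refine ⟨-a, b, hb, by push_cast; rw [← hab]; ring, ?_⟩
  push_cast [ha]
  exact CharTwo.neg_eq ε

lemma PP_sum (s : Finset ℕ) (f : ℕ → ℚ) (g : ℕ → ZMod 2)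
    (h : ∀ i ∈ s, PP (f i) (g i)) :
    PP (∑ i ∈ s, f i) (∑ i ∈ s, g i) := by
  classical
  induction s using Finset.induction_on with
  | empty => simpa using PP_zero
  | @insert x s' hx ih =>
    rw [Finset.sum_insert hx, Finset.sum_insert hx]
    exact PP_add (h x (mem_insert_self _ _)) (ih fun i hi => h i (mem_insert_of_mem hi))

lemma PP_cancel {n : ℤ} (hn : Odd n) {q : ℚ} {ε : ZMod 2}
    (h : PP ((n : ℚ) * q) ε) : PP q ε := by
  obtain ⟨a, b, hb, hab, ha⟩ := h
  exact ⟨a, n * b, hn.mul hb, by push_cast; rw [← hab]; ring, ha⟩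

/-- residue function for `2 * bernoulli n`. -/
def gg (i : ℕ) : ZMod 2 :=
  (if Even i then 1 else 0) + (if i = 0 then 1 else 0) + (if i = 1 then 1 else 0)

lemma even_sum_choose (n : ℕ) (hn : 1 ≤ n) :
    2 * (∑ i ∈ (range (n + 1)).filter (fun i => Even i), (n.choose i : ℤ)) = 2 ^ n := by
  classical
  have h1 : (∑ i ∈ range (n + 1), (n.choose i : ℤ)) = 2 ^ n := by
    exact_mod_cast congrArg (Nat.cast : ℕ → ℤ) (Nat.sum_range_choose n)
  have h2 : (∑ i ∈ range (n + 1), (-1 : ℤ) ^ i * n.choose i) = 0 :=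
    Int.alternating_sum_range_choose_of_ne (by omega)
  rw [← Finset.sum_filter_add_sum_filter_not (range (n + 1)) (fun i => Even i)] at h1 h2
  have he : ∑ i ∈ (range (n + 1)).filter (fun i => Even i), (-1 : ℤ) ^ i * n.choose i
      = ∑ i ∈ (range (n + 1)).filter (fun i => Even i), (n.choose i : ℤ) := by
    refine Finset.sum_congr rfl fun i hi => ?_
    rw [(Finset.mem_filter.1 hi).2.neg_one_pow, one_mul]
  have ho : ∑ i ∈ (range (n + 1)).filter (fun i => ¬ Even i), (-1 : ℤ) ^ i * n.choose i
      = -∑ i ∈ (range (n + 1)).filter (fun i => ¬ Even i), (n.choose i : ℤ) := by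
    rw [← Finset.sum_neg_distrib]
    refine Finset.sum_congr rfl fun i hi => ?_
    rw [(Nat.not_even_iff_odd.1 (Finset.mem_filter.1 hi).2).neg_one_pow]; ring
  rw [he, ho] at h2
  omega

lemma nat_odd_cast_zmod2 {n : ℕ} (hn : Odd n) : ((n : ZMod 2)) = 1 := by
  obtain ⟨t, ht⟩ := hn
  subst ht
  push_cast
  rw [(by decide : (2 : ZMod 2) = 0)]
  ring

lemma filter_even_mod2 (p : ℕ) (hp : 2 ≤ p) (hpe : Even p) :
    (∑ i ∈ range p, (if Even i then ((p + 1).choose i : ZMod 2) else 0)) = 1 := by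
  classical
  have hE := even_sum_choose (p + 1) (by omega)
  have hE' : (∑ i ∈ (range (p + 2)).filter (fun i => Even i), ((p + 1).choose i : ℤ))
      = 2 ^ p := by
    have h : (2 : ℤ) * (∑ i ∈ (range (p + 2)).filter (fun i => Even i), ((p + 1).choose i : ℤ))
        = 2 * 2 ^ p := by rw [hE]; ring
    exact mul_left_cancel₀ (by norm_num) h
  have hcast : (∑ i ∈ (range (p + 2)).filter (fun i => Even i), ((p + 1).choose i : ZMod 2))
      = 0 := by
    have h := congrArg (Int.cast : ℤ → ZMod 2) hE'
    push_cast at h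
    rw [h, (by decide : (2 : ZMod 2) = 0), zero_pow (by omega)]
  rw [Finset.sum_filter, Finset.sum_range_succ, Finset.sum_range_succ] at hcast
  have hodd : ¬ Even (p + 1) := by simpa [Nat.even_add_one] using hpe
  rw [if_neg hodd, if_pos hpe, Nat.choose_succ_self_right, add_zero] at hcast
  have hp1 : ((p + 1 : ℕ) : ZMod 2) = 1 :=
    nat_odd_cast_zmod2 (by simpa [Nat.even_add_one, Nat.not_odd_iff_even] using hpe.add_one)
  rw [hp1] at hcast
  have h := eq_neg_of_add_eq_zero_left hcast
  rw [h]; decide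

lemma gg_even {p : ℕ} (hp : 2 ≤ p) (hpe : Even p) : gg p = 1 := by
  have h0 : p ≠ 0 := by omega
  have h1 : p ≠ 1 := by omega
  simp [gg, hpe, h0, h1]

lemma odd_of_cast_one {a : ℤ} (h : (a : ZMod 2) = 1) : Odd a := by
  rcases Int.even_or_odd a with he | ho
  · exfalso
    obtain ⟨t, ht⟩ := he
    rw [(ZMod.intCast_zmod_eq_zero_iff_dvd a 2).2 ⟨t, by omega⟩] at h
    exact (by decide : (0 : ZMod 2) ≠ 1) h
  · exact ho

/-- key induction: `2 * bernoulli p` is a 2-adic integer with residue `gg p`. -/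
lemma bern_PP (p : ℕ) : PP (2 * bernoulli p) (gg p) := by
  induction p using Nat.strong_induction_on with
  | _ p ih =>
    match p, ih with
    | 0, _ => simpa [gg, bernoulli_zero, one_add_one_eq_two] using PP_int 2
    | 1, _ =>
      have h : (2 : ℚ) * bernoulli 1 = ((-1 : ℤ) : ℚ) := by norm_num [bernoulli_one]
      rw [h]
      simpa [gg] using PP_int (-1)
    | (n + 2), ih =>
      set p := n + 2 with hpdef
      rcases Nat.even_or_odd p with hpe | hpo
      · -- main case : p even, p ≥ 2
        have hp2 : 2 ≤ p := by omega
        -- the Bernoulli recurrence, multiplied by 2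
        have hs : (∑ i ∈ range (p + 1), ((p + 1).choose i : ℚ) * (2 * bernoulli i)) = 0 := by
          have h := sum_bernoulli (p + 1)
          rw [if_neg (by omega)] at h
          calc (∑ i ∈ range (p + 1), ((p + 1).choose i : ℚ) * (2 * bernoulli i))
              = 2 * ∑ i ∈ range (p + 1), ((p + 1).choose i : ℚ) * bernoulli i := by
                rw [Finset.mul_sum]; exact Finset.sum_congr rfl fun i _ => by ring
            _ = 0 := by rw [h]; ring
        rw [Finset.sum_range_succ, Nat.choose_succ_self_right] at hs
        have hmain : ((p + 1 : ℤ) : ℚ) * (2 * bernoulli p)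
            = -∑ i ∈ range p, ((p + 1).choose i : ℚ) * (2 * bernoulli i) := by
          push_cast at hs ⊢
          linarith [hs]
        have hsum : PP (∑ i ∈ range p, ((p + 1).choose i : ℚ) * (2 * bernoulli i))
            (∑ i ∈ range p, ((p + 1).choose i : ZMod 2) * gg i) := by
          refine PP_sum _ _ _ fun i hi => ?_
          have hcast : ((p + 1).choose i : ℚ) = (((p + 1).choose i : ℤ) : ℚ) := by push_cast; rfl
          have hcast2 : ((p + 1).choose i : ZMod 2) = ((((p + 1).choose i : ℤ)) : ZMod 2) := by
            push_cast; rfl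
          rw [hcast, hcast2]
          exact PP_mul (PP_int _) (ih i (Finset.mem_range.1 hi))
        have hPP : PP (2 * bernoulli p) (∑ i ∈ range p, ((p + 1).choose i : ZMod 2) * gg i) := by
          apply PP_cancel (n := (p + 1 : ℤ)) ?_ (by rw [hmain]; exact PP_neg hsum)
          have : Odd (p + 1) := by
            simpa [Nat.even_add_one, Nat.not_odd_iff_even] using hpe.add_one
          exact_mod_cast this.natCast (R := ℤ)
        -- compute the residue sum
        have hres : (∑ i ∈ range p, ((p + 1).choose i : ZMod 2) * gg i) = 1 := by
          have hsplit : ∀ i ∈ range p, ((p + 1).choose i : ZMod 2) * gg i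
              = (if Even i then ((p + 1).choose i : ZMod 2) else 0)
                + (if i = 0 then ((p + 1).choose i : ZMod 2) else 0)
                + (if i = 1 then ((p + 1).choose i : ZMod 2) else 0) := by
            intro i _
            unfold gg
            by_cases h0 : i = 0
            · subst h0; norm_num
            · by_cases h1 : i = 1
              · subst h1; norm_num
              · by_cases h2 : Even i <;> simp [h0, h1, h2]
          rw [Finset.sum_congr rfl hsplit]
          rw [Finset.sum_add_distrib, Finset.sum_add_distrib]
          rw [Finset.sum_ite_eq' (range p) 0, Finset.sum_ite_eq' (range p) 1]
          rw [if_pos (Finset.mem_range.2 (by omega)), if_pos (Finset.mem_range.2 (by omega))]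
          rw [filter_even_mod2 p hp2 hpe]
          rw [Nat.choose_zero_right, Nat.choose_one_right]
          have hp1 : ((p + 1 : ℕ) : ZMod 2) = 1 :=
            nat_odd_cast_zmod2 (by simpa [Nat.even_add_one, Nat.not_odd_iff_even] using hpe.add_one)
          rw [hp1]
          norm_num
          decide
        rw [gg_even hp2 hpe, ← hres]
        exact hPP
      · -- p odd, p ≥ 3 : bernoulli p = 0
        have hz : bernoulli p = 0 := by
          rw [bernoulli_eq_bernoulli'_of_ne_one (by omega)]
          exact bernoulli'_eq_zero_of_odd hpo (by omega)
        have hgg : gg p = 0 := by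
          have h0 : p ≠ 0 := by omega
          have h1 : p ≠ 1 := by omega
          simp [gg, Nat.not_even_iff_odd.2 hpo, h0, h1]
        rw [hz, hgg, mul_zero]
        exact PP_zero

/-- The topologist's Bernoulli numbers: `B m = (-1)^(m+1) * 𝔅_{2m}`. -/
def topB (m : ℕ) : ℚ := (-1) ^ (m + 1) * bernoulli (2 * m)

/-- For odd `k ≥ 1`, `4` divides the numerator of `(B_{2k} + B_k) / (B_{2k} * B_k)`. -/
theorem four_dvd_num_sum_inv_topB (k : ℕ) (hk : 0 < k) (hko : Odd k) :
    (4 : ℤ) ∣ ((topB (2 * k) + topB k) / (topB (2 * k) * topB k)).num := by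
  set q1 : ℚ := bernoulli (2 * k) with hq1def
  set q2 : ℚ := bernoulli (2 * (2 * k)) with hq2def
  have ht1 : topB k = q1 := by
    unfold topB
    rw [hko.add_one.neg_one_pow, one_mul]
  have ht2 : topB (2 * k) = -q2 := by
    unfold topB
    rw [(even_two_mul k).add_one.neg_one_pow, neg_one_mul]
  have h1 : PP (2 * q1) 1 := by
    have h := bern_PP (2 * k)
    rwa [gg_even (by omega) (even_two_mul k)] at h
  have h2 : PP (2 * q2) 1 := by
    have h := bern_PP (2 * (2 * k))
    rwa [gg_even (by omega) (even_two_mul (2 * k))] at h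
  obtain ⟨a, b, hb, hab, ha⟩ := h1
  obtain ⟨c, d, hd, hcd, hc⟩ := h2
  have haodd : Odd a := odd_of_cast_one ha
  have hcodd : Odd c := odd_of_cast_one hc
  have hq1ne : q1 ≠ 0 := by
    intro h0
    rw [h0] at hab
    simp only [mul_zero, zero_mul] at hab
    obtain ⟨t, ht⟩ := haodd
    have : (a : ℚ) = 0 := hab.symm
    have ha0 : a = 0 := by exact_mod_cast this
    omega
  have hq2ne : q2 ≠ 0 := by
    intro h0
    rw [h0] at hcd
    simp only [mul_zero, zero_mul] at hcd
    obtain ⟨t, ht⟩ := hcodd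
    have : (c : ℚ) = 0 := hcd.symm
    have hc0 : c = 0 := by exact_mod_cast this
    omega
  obtain ⟨m, hm⟩ : ∃ m : ℤ, a * d - c * b = 2 * m := by
    obtain ⟨r, hr⟩ := (haodd.mul hd).sub_odd (hcodd.mul hb)
    exact ⟨r, by omega⟩
  set x : ℚ := (topB (2 * k) + topB k) / (topB (2 * k) * topB k) with hxdef
  have key : x * ((a : ℚ) * c) = -4 * m := by
    have hmQ : (a : ℚ) * d - c * b = 2 * m := by exact_mod_cast congrArg (Int.cast : ℤ → ℚ) hm
    have hne : -(q2 * q1) ≠ 0 := by simp [hq1ne, hq2ne]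
    have hx2 : x = (q1 - q2) / (-(q2 * q1)) := by rw [hxdef, ht1, ht2]; ring_nf
    have e1 : (a : ℚ) * c = 4 * q1 * q2 * b * d := by rw [← hab, ← hcd]; ring
    rw [hx2, e1, div_mul_eq_mul_div, div_eq_iff hne]
    linear_combination (2*q1*q2) * hmQ + (2*q1*q2*(d:ℚ)) * hab - (2*q1*q2*(b:ℚ)) * hcd
  have hxx : (x.num : ℚ) * ((a : ℚ) * c) = -4 * m * x.den := by
    have hden : ((x.den : ℚ)) ≠ 0 := by
      exact_mod_cast x.den_ne_zero
    have h0 : x * (x.den : ℚ) = (x.num : ℚ) := (eq_div_iff hden).1 (Rat.num_div_den x).symm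
    calc (x.num : ℚ) * ((a : ℚ) * c) = (x * ((a : ℚ) * c)) * x.den := by rw [← h0]; ring
      _ = -4 * m * x.den := by rw [key]
  have hZ : x.num * (a * c) = -4 * m * x.den := by exact_mod_cast hxx
  have hp : Prime (2 : ℤ) := Int.prime_two
  have h2ac : ¬ (2 : ℤ) ∣ a * c := by
    intro ⟨t, ht⟩
    exact (Int.not_even_iff_odd.2 (haodd.mul hcodd)) ⟨t, by omega⟩
  have hdvd : (2 : ℤ) ^ 2 ∣ x.num * (a * c) := ⟨-m * x.den, by linarith⟩
  have := hp.pow_dvd_of_dvd_mul_right 2 h2ac hdvd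
  exact (by norm_num : (4 : ℤ) = 2 ^ 2) ▸ this
end

section
/- Let k ≥ 3 be an integer and write k = 2^j·c with c odd and j ≥ 0. Set a = 1 if k is even and a = 2 if k is odd. Let t and σ be integers with 2 ∣ t, and assume in addition that 8 ∣ t if k is even. If the rational number (a²·2^{4k−4}·𝔅_{2k}²·(2^{2k}−1)²·t − k²·σ) / (2^{4k+1}·k²·(2^{4k−1}−1)) is an integer, then 2^{4k−3−2j} divides σ. -/
open Finset

lemma odd_den_of_dvd {q : ℚ} {n : ℕ} (hn : Odd n) (h : q.den ∣ n) : Odd q.den := by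
  rw [← Nat.not_even_iff_odd] at hn ⊢
  intro he
  exact hn (he.two_dvd.trans h |> (even_iff_two_dvd).mpr)

lemma odd_den_mul {q r : ℚ} (hq : Odd q.den) (hr : Odd r.den) : Odd (q * r).den :=
  odd_den_of_dvd (hq.mul hr) (Rat.mul_den_dvd q r)

lemma odd_den_add {q r : ℚ} (hq : Odd q.den) (hr : Odd r.den) : Odd (q + r).den :=
  odd_den_of_dvd (hq.mul hr) (Rat.add_den_dvd q r)

lemma odd_den_int (z : ℤ) : Odd ((z : ℚ)).den := by simp [Rat.den_intCast]

lemma odd_den_sub {q r : ℚ} (hq : Odd q.den) (hr : Odd r.den) : Odd (q - r).den := by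
  rw [sub_eq_add_neg]
  exact odd_den_add hq (by rwa [Rat.neg_den])

lemma odd_den_sum {s : Finset ℕ} {f : ℕ → ℚ} (h : ∀ i ∈ s, Odd (f i).den) :
    Odd (∑ i ∈ s, f i).den := by
  classical
  induction s using Finset.induction with
  | empty => simp
  | insert x s hx ih =>
    rw [Finset.sum_insert hx]
    exact odd_den_add (h _ (Finset.mem_insert_self _ _))
      (ih fun i hi => h i (Finset.mem_insert_of_mem hi))

lemma odd_den_two_mul_bernoulli : ∀ m : ℕ, Odd (2 * bernoulli m).den := by
  intro m
  induction m using Nat.strong_induction_on with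
  | _ m ih =>
  rcases Nat.eq_zero_or_pos m with rfl | hm
  · norm_num
  · have H := sum_range_pow 2 m
    push_cast at H
    rw [Finset.sum_range_succ, Finset.sum_range_one] at H
    norm_num [zero_pow (show m ≠ 0 by omega)] at H
    rw [Finset.sum_range_succ] at H
    have hm1 : ((m : ℚ) + 1) ≠ 0 := by positivity
    have hlast : bernoulli m * ((m + 1).choose m) * (2:ℚ) ^ (m + 1 - m) / ((m:ℚ)+1)
        = 2 * bernoulli m := by
      rw [Nat.choose_succ_self_right, Nat.add_sub_cancel_left]
      field_simp
      push_cast; ring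
    rw [hlast] at H
    have hform : 2 * bernoulli m
        = 1 - ∑ i ∈ range m, bernoulli i * ((m + 1).choose i) * (2:ℚ) ^ (m + 1 - i) / ((m:ℚ)+1) := by
      linarith [H]
    rw [hform]
    apply odd_den_sub (by simpa using odd_den_int 1)
    apply odd_den_sum
    intro i hi
    rw [Finset.mem_range] at hi
    -- write s = m + 1 - i = 2^b * o with o odd
    obtain ⟨b, o, ho, hso⟩ := Nat.exists_eq_two_pow_mul_odd (n := m + 1 - i) (by omega)
    have hble : b + 1 ≤ m + 1 - i := by
      have h1 : 2 ^ b ≤ 2 ^ b * o := Nat.le_mul_of_pos_right _ ho.pos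
      have h2 : b < 2 ^ b := Nat.lt_two_pow_self
      omega
    have ho0 : (o : ℚ) ≠ 0 := by exact_mod_cast ho.pos.ne'
    have key : bernoulli i * ((m + 1).choose i) * (2:ℚ) ^ (m + 1 - i) / ((m:ℚ)+1)
        = (2 * bernoulli i) * (((m.choose i * 2 ^ (m - i - b) : ℕ) : ℚ) / (o : ℚ)) := by
      have hnat : (m.choose i : ℚ) * ((m:ℚ) + 1) = ((m+1).choose i : ℚ) * ((m + 1 - i : ℕ) : ℚ) := by
        exact_mod_cast congrArg (Nat.cast : ℕ → ℚ) (Nat.choose_mul_succ_eq m i)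
      have hpow : (2:ℚ) ^ (m + 1 - i) = 2 * 2 ^ b * 2 ^ (m - i - b) := by
        rw [← pow_succ', ← pow_add]
        congr 1
        omega
      have hsoQ : ((2:ℚ)) ^ b * (o:ℚ) = ((m + 1 - i : ℕ) : ℚ) := by
        rw [hso]; push_cast; ring
      rw [mul_div_assoc', div_eq_div_iff hm1 ho0]
      push_cast
      rw [hpow]
      linear_combination (2 * bernoulli i * 2 ^ (m - i - b) * (((m+1).choose i : ℕ) : ℚ)) * hsoQ
        - (2 * bernoulli i * 2 ^ (m - i - b)) * hnat
    rw [key]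
    apply odd_den_mul (ih i hi)
    apply odd_den_of_dvd ho
    have : ((m.choose i * 2 ^ (m - i - b) : ℕ) : ℚ) / (o : ℚ)
        = Rat.divInt (m.choose i * 2 ^ (m - i - b) : ℕ) (o : ℕ) := by
      rw [Rat.divInt_eq_div]; push_cast; ring
    rw [this]
    exact_mod_cast Rat.den_dvd (m.choose i * 2 ^ (m - i - b) : ℕ) (o : ℕ)

/-- The arithmetic content of Wall's formula for the Â-genus of `(4k-1)`-connected
`8k`-manifolds: integrality of the Â-genus forces `2^(4k-3-2j) ∣ σ`. -/
theorem wall_A_hat_integrality (k j c : ℕ) (hk : 3 ≤ k) (hc : Odd c)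
    (hkeq : k = 2 ^ j * c) (a : ℤ) (ha : a = if Even k then 1 else 2)
    (t σ : ℤ) (ht : 2 ∣ t) (ht8 : Even k → 8 ∣ t)
    (hint : (((a : ℚ) ^ 2 * 2 ^ (4 * k - 4) * (bernoulli (2 * k)) ^ 2 *
          (2 ^ (2 * k) - 1) ^ 2 * (t : ℚ) - (k : ℚ) ^ 2 * (σ : ℚ)) /
        (2 ^ (4 * k + 1) * (k : ℚ) ^ 2 * (2 ^ (4 * k - 1) - 1))).den = 1) :
    (2 : ℤ) ^ (4 * k - 3 - 2 * j) ∣ σ := by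
  have hjk : j < k := by
    have h1 : 2 ^ j ≤ k := by
      rw [hkeq]; exact Nat.le_mul_of_pos_right _ hc.pos
    have h2 : j < 2 ^ j := Nat.lt_two_pow_self
    omega
  set N := 4 * k - 3 - 2 * j with hN
  have hNj : 2 * j + N = 4 * k - 3 := by omega
  -- abbreviations
  set B : ℚ := bernoulli (2 * k) with hB
  set u : ℚ := 2 ^ (2 * k) - 1 with hu
  set g : ℚ := u * (2 * B) with hg
  set u' : ℚ := 2 ^ (4 * k - 1) - 1 with hu'
  -- a^2 * t = 8 * s'
  obtain ⟨s', hts⟩ : ∃ s' : ℤ, (a : ℚ) ^ 2 * (t : ℚ) = 8 * (s' : ℚ) := by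
    by_cases hke : Even k
    · obtain ⟨s', rfl⟩ := ht8 hke
      refine ⟨s', ?_⟩
      rw [ha, if_pos hke]
      push_cast; ring
    · obtain ⟨s', rfl⟩ := ht
      refine ⟨s', ?_⟩
      rw [ha, if_neg hke]
      push_cast; ring
  -- denominator nonzero
  have hk0 : (k : ℚ) ≠ 0 := Nat.cast_ne_zero.mpr (by omega)
  have hu'1 : (1:ℚ) < 2 ^ (4 * k - 1) := by
    apply one_lt_pow₀ (by norm_num) (by omega)
  have hu'0 : u' ≠ 0 := by rw [hu']; intro h; nlinarith
  have hD : (2:ℚ) ^ (4 * k + 1) * (k : ℚ) ^ 2 * u' ≠ 0 := by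
    apply mul_ne_zero (mul_ne_zero (by positivity) (pow_ne_zero _ hk0)) hu'0
  -- extract the integer
  set X : ℚ := (((a : ℚ) ^ 2 * 2 ^ (4 * k - 4) * B ^ 2 * u ^ 2 * (t : ℚ) - (k : ℚ) ^ 2 * (σ : ℚ)) /
        (2 ^ (4 * k + 1) * (k : ℚ) ^ 2 * u')) with hX
  have hXden : X.den = 1 := hint
  set m0 : ℤ := X.num with hm0
  have hXm : (m0 : ℚ) = X := Rat.coe_int_num_of_den_eq_one hXden
  have hEq : (a : ℚ) ^ 2 * 2 ^ (4 * k - 4) * B ^ 2 * u ^ 2 * (t : ℚ) - (k : ℚ) ^ 2 * (σ : ℚ)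
      = (m0 : ℚ) * (2 ^ (4 * k + 1) * (k : ℚ) ^ 2 * u') := by
    rw [hXm, hX]
    exact (div_mul_cancel₀ _ hD).symm
  -- rewrite the first summand
  have hp1 : (2:ℚ) ^ (4 * k - 4) * 8 = 2 ^ (4 * k - 3) * 4 := by
    rw [show (8:ℚ) = 2 ^ 3 by norm_num, show (4:ℚ) = 2 ^ 2 by norm_num,
      ← pow_add, ← pow_add]
    congr 1
    omega
  have e1 : (a : ℚ) ^ 2 * 2 ^ (4 * k - 4) * B ^ 2 * u ^ 2 * (t : ℚ)
      = 2 ^ (4 * k - 3) * g ^ 2 * (s' : ℚ) := by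
    rw [hg]
    linear_combination (2 ^ (4 * k - 4) * B ^ 2 * u ^ 2) * hts
      + (B ^ 2 * u ^ 2 * (s' : ℚ)) * hp1
  rw [e1] at hEq
  -- cancel the power of two
  have hkQ : (k : ℚ) = 2 ^ j * c := by rw [hkeq]; push_cast; ring
  have hk2 : ((k : ℚ)) ^ 2 = 2 ^ (2 * j) * (c : ℚ) ^ 2 := by rw [hkQ]; ring
  have P1 : (2:ℚ) ^ (4 * k - 3) = 2 ^ (2 * j) * 2 ^ N := by rw [← pow_add, hNj]
  have P2 : (2:ℚ) ^ (4 * k + 1) = 2 ^ (2 * j) * 2 ^ N * 16 := by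
    rw [show (16:ℚ) = 2 ^ 4 by norm_num, ← pow_add, ← pow_add]
    congr 1
    omega
  set w : ℚ := g ^ 2 * (s' : ℚ) - 16 * (m0 : ℚ) * (k : ℚ) ^ 2 * u' with hw
  have key : (c : ℚ) ^ 2 * (σ : ℚ) = 2 ^ N * w := by
    apply mul_left_cancel₀ (show (2:ℚ) ^ (2 * j) ≠ 0 by positivity)
    rw [hw]
    linear_combination (-1 : ℚ) * hEq - (σ : ℚ) * hk2 + (g ^ 2 * (s' : ℚ)) * P1
      - ((m0 : ℚ) * (k : ℚ) ^ 2 * u') * P2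
  -- w has odd denominator
  have hgod : Odd g.den := by
    have : g = ((2 ^ (2 * k) - 1 : ℤ) : ℚ) * (2 * bernoulli (2 * k)) := by
      rw [hg, hu, hB]; push_cast; ring
    rw [this]
    exact odd_den_mul (odd_den_int _) (odd_den_two_mul_bernoulli (2 * k))
  have hwod : Odd w.den := by
    have h2 : w = g * g * (s' : ℚ) - ((16 * m0 * (k:ℤ) ^ 2 * (2 ^ (4 * k - 1) - 1) : ℤ) : ℚ) := by
      rw [hw, hu']; push_cast; ring
    rw [h2]
    exact odd_den_sub (odd_den_mul (odd_den_mul hgod hgod) (odd_den_int s')) (odd_den_int _)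
  -- w.den divides 2^N
  have hwden : w.den ∣ 2 ^ N := by
    have hval : w = Rat.divInt ((c:ℤ) ^ 2 * σ) ((2:ℤ) ^ N) := by
      rw [Rat.divInt_eq_div, eq_div_iff (show ((2 ^ N : ℤ) : ℚ) ≠ 0 by positivity)]
      push_cast
      linear_combination (-1 : ℚ) * key
    rw [hval]
    have := Rat.den_dvd ((c:ℤ) ^ 2 * σ) ((2:ℤ) ^ N)
    exact_mod_cast this
  have hwden1 : w.den = 1 := by
    refine Nat.Coprime.eq_one_of_dvd ?_ hwden
    apply Nat.Coprime.pow_right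
    exact hwod.coprime_two_right
  -- conclude
  have hwz : ((c:ℤ)) ^ 2 * σ = 2 ^ N * w.num := by
    have : (w.num : ℚ) = w := Rat.coe_int_num_of_den_eq_one hwden1
    have h3 : ((c:ℚ)) ^ 2 * (σ : ℚ) = 2 ^ N * (w.num : ℚ) := by rw [this]; exact key
    exact_mod_cast h3
  have hdvd : (2:ℤ) ^ N ∣ (c:ℤ) ^ 2 * σ := ⟨w.num, hwz⟩
  have hcop : IsCoprime ((2:ℤ) ^ N) ((c:ℤ) ^ 2) := by
    apply IsCoprime.pow
    rw [Int.isCoprime_iff_gcd_eq_one]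
    have : Nat.Coprime c 2 := hc.coprime_two_right
    simpa [Int.gcd, Nat.coprime_comm] using this
  exact hcop.dvd_of_dvd_mul_left hdvd
end

section
/- Let k ≥ 3 be an odd integer, let B_m = (−1)^{m+1}·𝔅_{2m} denote the m-th topologist's Bernoulli number, and let σ be an integer divisible by 2^{4k−3}. Then the numerator of the rational number ((B_{2k} + B_k)/(B_{2k}·B_k)) · (σ/2^{4k−2}) is even. -/
open Finset

lemma faulhaber_ident (n : ℕ) (h2 : 2 ≤ n) :
    ((n : ℚ) + 1) * (1 - 2 * bernoulli n) =
      ∑ k ∈ range n, bernoulli k * ((n + 1).choose k) * 2 ^ (n + 1 - k) := by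
  have h := sum_range_pow 2 n
  have hlhs : (∑ k ∈ range 2, (k : ℚ) ^ n) = 1 := by
    have hn : n ≠ 0 := by omega
    simp [Finset.sum_range_succ, zero_pow hn]
  rw [hlhs, ← Finset.sum_div, eq_div_iff (by positivity : ((n : ℚ) + 1) ≠ 0)] at h
  rw [Finset.sum_range_succ, Nat.choose_succ_self_right] at h
  have hnn : n + 1 - n = 1 := by omega
  rw [hnn] at h
  push_cast at h ⊢
  linarith [h]

lemma half_lemma : padicNorm 2 (2 : ℚ) = 1/2 := by
  have := padicNorm.padicNorm_p (p := 2) (by norm_num)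
  rw [show ((2:ℕ):ℚ) = (2:ℚ) by norm_num] at this
  rw [this]; norm_num

lemma step (n : ℕ) (h2 : 2 ≤ n) (hev : Even n)
    (ih : ∀ k < n, padicNorm 2 (2 * bernoulli k) ≤ 1) :
    padicNorm 2 (1 - 2 * bernoulli n) ≤ 1/2 := by
  have hid := faulhaber_ident n h2
  have hsum : padicNorm 2 (∑ k ∈ range n,
      bernoulli k * ((n + 1).choose k) * 2 ^ (n + 1 - k)) ≤ 1/2 := by
    apply padicNorm.sum_le' _ (by norm_num)
    intro k hk
    rw [Finset.mem_range] at hk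
    have hexp : (2 : ℚ) ^ (n + 1 - k) = 2 * (2 * bernoulli k) * 2 ^ (n - 1 - k) * 0 + 2 ^ (n+1-k) := by ring
    have hterm : bernoulli k * ((n + 1).choose k : ℚ) * 2 ^ (n + 1 - k)
        = ((n + 1).choose k : ℚ) * (2 * bernoulli k) * (2 * 2 ^ (n - 1 - k)) := by
      have : n + 1 - k = (n - 1 - k) + 2 := by omega
      rw [this]; ring
    rw [hterm, padicNorm.mul (((n + 1).choose k : ℚ) * (2 * bernoulli k)) (2 * 2 ^ (n - 1 - k)),
      padicNorm.mul ((n + 1).choose k : ℚ) (2 * bernoulli k),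
      padicNorm.mul (2:ℚ) (2 ^ (n - 1 - k))]
    have h1 : padicNorm 2 (((n + 1).choose k : ℚ)) ≤ 1 := by
      exact_mod_cast padicNorm.of_nat ((n+1).choose k)
    have h2' : padicNorm 2 (2 * bernoulli k) ≤ 1 := ih k hk
    have h3 : padicNorm 2 ((2:ℚ) ^ (n - 1 - k)) ≤ 1 := by
      exact_mod_cast padicNorm.of_nat (2 ^ (n - 1 - k))
    have h4 := padicNorm.nonneg (p := 2) (((n + 1).choose k : ℚ))
    have h5 := padicNorm.nonneg (p := 2) (2 * bernoulli k)
    have h6 := padicNorm.nonneg (p := 2) ((2:ℚ) ^ (n - 1 - k))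
    rw [half_lemma]
    have hab : padicNorm 2 (((n + 1).choose k : ℚ)) * padicNorm 2 (2 * bernoulli k) ≤ 1 := by
      nlinarith
    nlinarith
  have hodd : padicNorm 2 ((n : ℚ) + 1) = 1 := by
    have : ((n : ℚ) + 1) = ((n + 1 : ℕ) : ℚ) := by push_cast; ring
    rw [this, padicNorm.nat_eq_one_iff]
    obtain ⟨m, rfl⟩ := hev
    omega
  calc padicNorm 2 (1 - 2 * bernoulli n)
      = padicNorm 2 (((n : ℚ) + 1) * (1 - 2 * bernoulli n)) := by
        rw [padicNorm.mul, hodd, one_mul]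
    _ ≤ 1/2 := by rw [hid]; exact hsum

lemma bernoulli_two_int : ∀ n : ℕ, padicNorm 2 (2 * bernoulli n) ≤ 1 := by
  intro n
  induction n using Nat.strong_induction_on with
  | _ n ih =>
    match n, ih with
    | 0, _ =>
        rw [bernoulli_zero, mul_one, half_lemma]; norm_num
    | 1, _ =>
        rw [bernoulli_one, show (2:ℚ) * (-1/2) = -1 by norm_num, padicNorm.neg, padicNorm.one]
    | (m+2), ih =>
      rcases Nat.even_or_odd (m+2) with hev | hodd
      · have h := step (m+2) (by omega) hev ih
        have : 2 * bernoulli (m+2) = 1 - (1 - 2 * bernoulli (m+2)) := by ring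
        rw [this]
        refine padicNorm.sub.trans ?_
        rw [padicNorm.one]
        exact max_le le_rfl (h.trans (by norm_num))
      · have : bernoulli (m+2) = 0 := by
          rw [bernoulli_eq_bernoulli'_of_ne_one (by omega)]
          exact bernoulli'_eq_zero_of_odd hodd (by omega)
        simp [this]

lemma key_s10 (n : ℕ) (h2 : 2 ≤ n) (hev : Even n) :
    padicNorm 2 (1 - 2 * bernoulli n) ≤ 1/2 :=
  step n h2 hev (fun k _ => bernoulli_two_int k)

lemma norm_bernoulli (n : ℕ) (h2 : 2 ≤ n) (hev : Even n) :
    padicNorm 2 (bernoulli n) = 2 := by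
  have hk := key_s10 n h2 hev
  have h1 : padicNorm 2 (2 * bernoulli n) = 1 := by
    have heq : (1 : ℚ) = (1 - 2 * bernoulli n) + 2 * bernoulli n := by ring
    have hle : (1:ℚ) ≤ max (padicNorm 2 (1 - 2 * bernoulli n)) (padicNorm 2 (2 * bernoulli n)) := by
      have := padicNorm.nonarchimedean (p := 2) (q := 1 - 2 * bernoulli n) (r := 2 * bernoulli n)
      rw [← heq, padicNorm.one] at this
      exact this
    rcases le_max_iff.mp hle with h | h
    · linarith
    · exact le_antisymm (bernoulli_two_int n) h
  rw [padicNorm.mul, half_lemma] at h1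
  linarith

lemma even_num_of_norm_le (q : ℚ) (h : padicNorm 2 q ≤ 1/2) : Even q.num := by
  have hden : ((q.den : ℚ)) ≠ 0 := by
    exact_mod_cast q.den_ne_zero
  have hnum : (q.num : ℚ) = q * q.den :=
    (div_eq_iff hden).mp (Rat.num_div_den q)
  have hd : padicNorm 2 ((q.den : ℚ)) ≤ 1 := padicNorm.of_nat q.den
  have hn : padicNorm 2 ((q.num : ℚ)) ≤ (2:ℚ)^(-(1:ℕ) : ℤ) := by
    rw [hnum, padicNorm.mul]
    have h0 := padicNorm.nonneg (p := 2) q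
    have h0' := padicNorm.nonneg (p := 2) ((q.den : ℚ))
    have : (2:ℚ)^(-(1:ℕ) : ℤ) = 1/2 := by norm_num
    rw [this]
    nlinarith
  have hdvd : (((2:ℕ)^(1:ℕ) : ℕ) : ℤ) ∣ q.num := by
    rw [padicNorm.dvd_iff_norm_le]
    exact_mod_cast hn
  obtain ⟨r, hr⟩ := hdvd
  exact ⟨r, by omega⟩

/-- For odd `k ≥ 3` and `2^(4k-3) ∣ σ`, the numerator of
`((B_{2k} + B_k)/(B_{2k}·B_k)) · (σ/2^(4k-2))` is even. -/
theorem even_num_yang_condition_odd_k (k : ℕ) (hk : 3 ≤ k) (hko : Odd k)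
    (σ : ℤ) (hσ : (2 : ℤ) ^ (4 * k - 3) ∣ σ) :
    Even (((topB (2 * k) + topB k) / (topB (2 * k) * topB k) *
      ((σ : ℚ) / 2 ^ (4 * k - 2))).num) := by
  obtain ⟨t, rfl⟩ := hσ
  set b := bernoulli (2 * k) with hb
  set c := bernoulli (2 * (2 * k)) with hc
  have htopk : topB k = b := by
    rw [topB, Even.neg_one_pow hko.add_one, one_mul]
  have htop2k : topB (2 * k) = -c := by
    rw [topB, Odd.neg_one_pow ⟨k, by ring⟩, neg_one_mul]
  rw [htopk, htop2k]
  apply even_num_of_norm_le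
  -- second factor simplifies to t / 2
  have hfact : (((2:ℤ) ^ (4 * k - 3) * t : ℤ) : ℚ) / 2 ^ (4 * k - 2) = (t : ℚ) / 2 := by
    have he : 4 * k - 2 = (4 * k - 3) + 1 := by omega
    have h0 : ((2:ℚ) ^ (4*k-3)) ≠ 0 := by positivity
    rw [he, pow_succ]
    push_cast
    field_simp
  rw [hfact, padicNorm.mul, padicNorm.div, padicNorm.div, padicNorm.mul, padicNorm.neg]
  have hnb : padicNorm 2 b = 2 := norm_bernoulli (2 * k) (by omega) ⟨k, by ring⟩
  have hnc : padicNorm 2 c = 2 := norm_bernoulli (2 * (2 * k)) (by omega) ⟨2*k, by ring⟩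
  have hdiff : padicNorm 2 (-c + b) ≤ 1 := by
    have heq : -c + b = ((1 - 2 * c) - (1 - 2 * b)) / 2 := by ring
    rw [heq, padicNorm.div, half_lemma]
    have hsub : padicNorm 2 ((1 - 2 * c) - (1 - 2 * b)) ≤ 1/2 :=
      padicNorm.sub.trans (max_le (key_s10 _ (by omega) ⟨2*k, by ring⟩) (key_s10 _ (by omega) ⟨k, by ring⟩))
    linarith
  have ht : padicNorm 2 ((t:ℚ)) ≤ 1 := padicNorm.of_int t
  rw [hnb, hnc, half_lemma]
  have h1 := padicNorm.nonneg (p := 2) (-c + b)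
  have h2 := padicNorm.nonneg (p := 2) ((t:ℚ))
  nlinarith
end
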